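/- The scaled stochastic uniform quantization function is unbiased: for every vector v ∈ ℝ^n whose coordinates are not all equal, E[Q(v)] = v, i.e. E[Q(v)_i] = v_i for every coordinate i. -/

import Mathlib

/- Under the Bernoulli law of `ξ`, the expectation of `Q̂(x) = ⌊x s⌋/s + ξ/s` is
`⌊x s⌋/s + k/s = x`, since `k = s x − ⌊x s⌋`. Affinity of `Q` in `Q̂` then gives
`E[Q(v)_i] = α (v_i − β)/α + β = v_i`, where `α ≠ 0` because the coordinates are not all equal. -/

open MeasureTheory ProbabilityTheory

/-- The law of a real-valued Bernoulli random variable with success probability `p`. -/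
noncomputable def bernoulliLaw (p : ℝ) : Measure ℝ :=
  ENNReal.ofReal (1 - p) • Measure.dirac 0 + ENNReal.ofReal p • Measure.dirac 1

/-- The success probability `k = s·x − ⌊x·s⌋` used in stochastic uniform quantization. -/
noncomputable def quantProb (s : ℕ) (x : ℝ) : ℝ := (s : ℝ) * x - (⌊x * (s : ℝ)⌋ : ℝ)

/-- One coordinate of the stochastic uniform quantization with `s+1` levels:
`Q̂(x) = ⌊x·s⌋/s + ξ/s`, where `ξ` is the Bernoulli noise. -/
noncomputable def qhat (s : ℕ) (x ξ : ℝ) : ℝ := (⌊x * (s : ℝ)⌋ : ℝ) / s + ξ / s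

lemma ciInf_lt_ciSup_of_ne {ι α : Type*} [Finite ι] [ConditionallyCompleteLinearOrder α]
    {v : ι → α} {j k : ι} (h : v j ≠ v k) : ⨅ i, v i < ⨆ i, v i := by
  have hbdd : BddBelow (Set.range v) := (Set.finite_range v).bddBelow
  have hbdd' : BddAbove (Set.range v) := (Set.finite_range v).bddAbove
  rcases h.lt_or_gt with h | h
  · exact (ciInf_le hbdd j).trans_lt (h.trans_le (le_ciSup hbdd' k))
  · exact (ciInf_le hbdd k).trans_lt (h.trans_le (le_ciSup hbdd' j))

lemma integral_bernoulliLaw {p : ℝ} (hp₀ : 0 ≤ p) (hp₁ : p ≤ 1) (f : ℝ → ℝ) :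
    ∫ y, f y ∂bernoulliLaw p = (1 - p) * f 0 + p * f 1 := by
  have hint (a : ℝ) (c : ℝ) : Integrable f (ENNReal.ofReal c • Measure.dirac a) :=
    (integrable_dirac enorm_lt_top).smul_measure ENNReal.ofReal_ne_top
  rw [bernoulliLaw, integral_add_measure (hint 0 _) (hint 1 _), integral_smul_measure,
    integral_smul_measure, integral_dirac, integral_dirac, ENNReal.toReal_ofReal hp₀,
    ENNReal.toReal_ofReal (sub_nonneg.mpr hp₁), smul_eq_mul, smul_eq_mul]

lemma quantProb_nonneg (s : ℕ) (x : ℝ) : 0 ≤ quantProb s x := by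
  rw [quantProb, sub_nonneg, mul_comm]
  exact Int.floor_le _

lemma quantProb_lt_one (s : ℕ) (x : ℝ) : quantProb s x < 1 := by
  rw [quantProb, sub_lt_iff_lt_add', mul_comm]
  exact Int.lt_floor_add_one _

lemma quantProb_mul_qhat_add {s : ℕ} (hs : s ≠ 0) (x : ℝ) :
    (1 - quantProb s x) * qhat s x 0 + quantProb s x * qhat s x 1 = x := by
  simp only [qhat, quantProb]
  field_simp
  ring

theorem scaled_stochastic_quantization_unbiased_general
    {Ω : Type*} [MeasurableSpace Ω] (μ : Measure Ω) [IsProbabilityMeasure μ]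
    {n : ℕ} (s : ℕ) (hs : 1 ≤ s)
    (v : Fin n → ℝ) (hne : ∃ i j, v i ≠ v j)
    (β α : ℝ) (hα : α = (⨆ i, v i) - ⨅ i, v i)
    (ξ : Fin n → Ω → ℝ) (hmeas : ∀ i, Measurable (ξ i))
    (hlaw : ∀ i, μ.map (ξ i) = bernoulliLaw (quantProb s ((v i - β) / α)))
    (i : Fin n) :
    ∫ ω, (α * qhat s ((v i - β) / α) (ξ i ω) + β) ∂μ = v i := by
  obtain ⟨j, k, hjk⟩ := hne
  have hα₀ : α ≠ 0 := by
    rw [hα, sub_ne_zero]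
    exact (ciInf_lt_ciSup_of_ne hjk).ne'
  set x := (v i - β) / α
  set p := quantProb s x
  have hQ : Measurable fun y ↦ α * qhat s x y + β := by unfold qhat; fun_prop
  calc ∫ ω, (α * qhat s x (ξ i ω) + β) ∂μ
      = ∫ y, (α * qhat s x y + β) ∂(μ.map (ξ i)) :=
        (integral_map (hmeas i).aemeasurable hQ.aestronglyMeasurable).symm
    _ = α * ((1 - p) * qhat s x 0 + p * qhat s x 1) + β := by
        rw [hlaw i, integral_bernoulliLaw (quantProb_nonneg s x) (quantProb_lt_one s x).le]
        ring
    _ = v i := by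
        rw [quantProb_mul_qhat_add (by omega), mul_div_cancel₀ _ hα₀, sub_add_cancel]

/-- The scaled stochastic uniform quantization `Q(v) = α·Q̂((v−β)/α) + β` with
`β = min_i v_i` and `α = max_i v_i − min_i v_i` is unbiased: `E[Q(v)_i] = v_i`. -/
theorem scaled_stochastic_quantization_unbiased
    {Ω : Type*} [MeasurableSpace Ω] (μ : Measure Ω) [IsProbabilityMeasure μ]
    {n : ℕ} (s : ℕ) (hs : 1 ≤ s)
    (v : Fin n → ℝ) (hne : ∃ i j, v i ≠ v j)
    (β α : ℝ) (hβ : β = ⨅ i, v i) (hα : α = (⨆ i, v i) - ⨅ i, v i)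
    (ξ : Fin n → Ω → ℝ) (hmeas : ∀ i, Measurable (ξ i))
    (hlaw : ∀ i, μ.map (ξ i) = bernoulliLaw (quantProb s ((v i - β) / α)))
    (i : Fin n) :
    ∫ ω, (α * qhat s ((v i - β) / α) (ξ i ω) + β) ∂μ = v i :=
  scaled_stochastic_quantization_unbiased_general μ s hs v hne β α hα ξ hmeas hlaw i
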